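/- For the generic Cusp, the zero level surface H_t⁰ given parametrically by x(x₀) = (x₀/2)(1 ± √(1 − t²x₀²)), y(x₀) = (1/(2t))(t²x₀² − 1 ± √(1 − t²x₀²)) satisfies, for every x₀ with |t x₀| ≤ 1, the Hamilton–Jacobi relations: the point (x,y) = Φ_t(x₀', y₀') for some pre-image with A(x₀',y₀',x,y,t) + S₀(x₀',y₀') = 0. -/

import Mathlib

/-! The pre-image is `(x₀, b)` with `2 t b + 1 = ±√(1 − t²x₀²)`. Along a trajectory
`x − x₀ = t x₀ b` and `y − b = t x₀²/2`, so the total action factors as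
`x₀²/(8t) · ((2 t b + 1)² − (1 − t² x₀²))`, which vanishes for exactly this choice of `b`. -/

/-- The free flow map for the generic Cusp (`S₀(x₀,y₀) = x₀² y₀/2`). -/
noncomputable def cuspFlow (t : ℝ) (p : ℝ × ℝ) : ℝ × ℝ :=
  (p.1 + t * p.1 * p.2, p.2 + t * p.1 ^ 2 / 2)

/-- The free action `A(x₀,y₀,x,y,t) = ((x−x₀)² + (y−y₀)²)/(2t)`. -/
noncomputable def cuspFreeAction (t x y x₀ y₀ : ℝ) : ℝ :=
  ((x - x₀) ^ 2 + (y - y₀) ^ 2) / (2 * t)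

/-- The initial phase `S₀(x₀,y₀) = x₀² y₀ / 2`. -/
noncomputable def cuspS₀ (x₀ y₀ : ℝ) : ℝ := x₀ ^ 2 * y₀ / 2

lemma cuspFlow_eq_of_two_mul_add_one_eq {t : ℝ} (ht : t ≠ 0) (a : ℝ) {b c : ℝ}
    (hc : 2 * t * b + 1 = c) :
    cuspFlow t (a, b) = (a / 2 * (1 + c), 1 / (2 * t) * (t ^ 2 * a ^ 2 - 1 + c)) := by
  subst hc
  simp only [cuspFlow, Prod.mk.injEq]
  constructor
  · ring
  · field_simp
    ring

lemma cusp_total_action_of_cuspFlow_eq {t : ℝ} (ht : t ≠ 0) {a b x y : ℝ}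
    (h : cuspFlow t (a, b) = (x, y)) :
    cuspFreeAction t x y a b + cuspS₀ a b =
      a ^ 2 / (8 * t) * ((2 * t * b + 1) ^ 2 - (1 - t ^ 2 * a ^ 2)) := by
  simp only [cuspFlow, Prod.mk.injEq] at h
  obtain ⟨rfl, rfl⟩ := h
  simp only [cuspFreeAction, cuspS₀]
  field_simp
  ring

lemma sq_sign_mul_sqrt {σ u : ℝ} (hσ : σ = 1 ∨ σ = -1) (hu : 0 ≤ u) :
    (σ * √u) ^ 2 = u := by
  rcases hσ with rfl | rfl <;> simp [Real.sq_sqrt hu]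

/-- for the generic Cusp, every point of the parametric curve
`x(x₀) = (x₀/2)(1 ± √(1 − t²x₀²))`, `y(x₀) = (1/(2t))(t²x₀² − 1 ± √(1 − t²x₀²))`
(for `|t x₀| ≤ 1`) lies on the zero level surface `H_t⁰`: it is the image under `Φ_t` of
a pre-image point at which the total action `A + S₀` vanishes. -/
theorem cusp_zero_level_surface (t x₀ : ℝ) (ht : 0 < t)
    (hx₀ : |t * x₀| ≤ 1) (sg : ℝ) (hsg : sg = 1 ∨ sg = -1) :
    ∀ x y : ℝ,
      x = (x₀ / 2) * (1 + sg * Real.sqrt (1 - t ^ 2 * x₀ ^ 2)) →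
      y = (1 / (2 * t)) * (t ^ 2 * x₀ ^ 2 - 1 + sg * Real.sqrt (1 - t ^ 2 * x₀ ^ 2)) →
      ∃ x₀' y₀' : ℝ,
        cuspFlow t (x₀', y₀') = (x, y) ∧
        cuspFreeAction t x y x₀' y₀' + cuspS₀ x₀' y₀' = 0 := by
  rintro x y rfl rfl
  set c := sg * √(1 - t ^ 2 * x₀ ^ 2)
  have ht₀ : t ≠ 0 := ht.ne'
  have hc : 2 * t * ((c - 1) / (2 * t)) + 1 = c := by
    field_simp
    ring
  have hc_sq : c ^ 2 = 1 - t ^ 2 * x₀ ^ 2 := by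
    refine sq_sign_mul_sqrt hsg ?_
    rw [sub_nonneg, ← mul_pow]
    exact (sq_le_one_iff_abs_le_one _).mpr hx₀
  have hflow := cuspFlow_eq_of_two_mul_add_one_eq ht₀ x₀ hc
  refine ⟨x₀, (c - 1) / (2 * t), hflow, ?_⟩
  rw [cusp_total_action_of_cuspFlow_eq ht₀ hflow, hc, hc_sq, sub_self, mul_zero]
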